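/- (Sufficiency for SD-EF1 with two agents) Let A be an allocation of a finite set of goods S to n = 2 agents with additive nonnegative valuations. If |A_i ∩ T_i(S,r)| ≥ ⌊r/2⌋ for both agents i ∈ {1,2} and all r ∈ [|S|], then A is SD-EF1. -/

import Mathlib

open Finset
open scoped Classical

noncomputable section

/-- `A` is an allocation of the set of goods `S` among `n` agents. -/
def IsAlloc {G : Type*} (n : ℕ) (S : Finset G) (A : Fin n → Finset G) : Prop :=
  (∀ i j : Fin n, i ≠ j → Disjoint (A i) (A j)) ∧ Finset.univ.biUnion A = S

/-- The top-set `H_i(S,g) = {g' ∈ S : v g' ≥ v g}`. -/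
def topSet {G : Type*} (v : G → ℝ) (S : Finset G) (g : G) : Finset G :=
  S.filter (fun g' => v g ≤ v g')

/-- Stochastic dominance: `X ≽^SD Y` w.r.t. valuation `v` over the set of goods `S`. -/
def SDge {G : Type*} [DecidableEq G] (v : G → ℝ) (S X Y : Finset G) : Prop :=
  ∀ g ∈ S, (Y ∩ topSet v S g).card ≤ (X ∩ topSet v S g).card

/-- The allocation `A` of goods `S` is SD-EF1. -/
def SDEF1 {G : Type*} [DecidableEq G] (n : ℕ) (v : Fin n → G → ℝ) (S : Finset G)
    (A : Fin n → Finset G) : Prop :=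
  ∀ i j : Fin n, A j ≠ ∅ → ∃ g ∈ A j, SDge (v i) S (A i) ((A j).erase g)

/-- The strict preference `g ≻̂ g'` obtained from the valuation `v`, breaking ties by the
fixed (global) linear order on the goods. -/
def strictPref {G : Type*} [LinearOrder G] (v : G → ℝ) (g g' : G) : Prop :=
  v g' < v g ∨ (v g = v g' ∧ g' < g)

/-- `T` is a top-set prefix of `S` under `≻̂`: `T ⊆ S` and every good of `T` is strictly
preferred (ties broken by the global order) to every good of `S \ T`.  The set
`T_i(S, r)` is the unique such `T` of cardinality `r`. -/
def IsTopPrefix {G : Type*} [LinearOrder G] (v : G → ℝ) (S T : Finset G) : Prop :=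
  T ⊆ S ∧ ∀ g ∈ T, ∀ g' ∈ S \ T, strictPref v g g'

/-! Every top-set `H_i(S,g)` is a prefix of `≻̂_i`, so the hypothesis gives agent `i` at least
`⌊|H|/2⌋` goods of `H`, and agent `j` therefore at most one more. Removing from `A_j` the good
agent `i` values most removes a good of `H` whenever `A_j` meets `H` at all. -/

theorem IsAlloc.subset {G : Type*} {n : ℕ} {S : Finset G} {A : Fin n → Finset G}
    (hA : IsAlloc n S A) (k : Fin n) : A k ⊆ S :=
  hA.2 ▸ subset_biUnion_of_mem A (mem_univ k)

theorem IsAlloc.union_eq_of_ne {G : Type*} [DecidableEq G] {S : Finset G}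
    {A : Fin 2 → Finset G} (hA : IsAlloc 2 S A) {i j : Fin 2} (hij : i ≠ j) : A i ∪ A j = S := by
  ext x
  rw [mem_union, ← hA.2]
  simp only [mem_biUnion, mem_univ, true_and]
  constructor
  · rintro (hx | hx)
    exacts [⟨i, hx⟩, ⟨j, hx⟩]
  · rintro ⟨k, hx⟩
    obtain rfl | rfl : k = i ∨ k = j := by omega
    exacts [Or.inl hx, Or.inr hx]

theorem IsAlloc.card_inter_add_card_inter {G : Type*} [DecidableEq G] {S : Finset G}
    {A : Fin 2 → Finset G} (hA : IsAlloc 2 S A) {i j : Fin 2} (hij : i ≠ j) {T : Finset G}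
    (hT : T ⊆ S) :
    (A i ∩ T).card + (A j ∩ T).card = T.card := by
  rw [← card_union_of_disjoint ((hA.1 i j hij).mono inter_subset_left inter_subset_left),
    ← union_inter_distrib_right, hA.union_eq_of_ne hij, inter_eq_right.2 hT]

theorem isTopPrefix_topSet {G : Type*} [LinearOrder G] (v : G → ℝ) (S : Finset G) (g : G) :
    IsTopPrefix v S (topSet v S g) := by
  refine ⟨filter_subset _ _, fun a ha b hb => Or.inl ?_⟩
  simp only [topSet, mem_sdiff, mem_filter] at ha hb
  exact (not_le.1 fun hle => hb.2 ⟨hb.1, hle⟩).trans_le ha.2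

theorem card_erase_inter_topSet_of_forall_le {G : Type*} [DecidableEq G] (v : G → ℝ)
    {S X : Finset G} {g : G} (hX : X ⊆ S) (hg : g ∈ X) (hmax : ∀ x ∈ X, v x ≤ v g) (g₀ : G) :
    (X.erase g ∩ topSet v S g₀).card = (X ∩ topSet v S g₀).card - 1 := by
  rw [erase_inter]
  by_cases hgH : g ∈ topSet v S g₀
  · exact card_erase_of_mem (mem_inter.2 ⟨hg, hgH⟩)
  · have hempty : X ∩ topSet v S g₀ = ∅ := by
      refine eq_empty_of_forall_notMem fun x hx => hgH ?_
      simp only [topSet, mem_inter, mem_filter] at hx ⊢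
      exact ⟨hX hg, hx.2.2.trans (hmax x hx.1)⟩
    simp [hempty]

theorem sdef1_of_topPrefix_condition_two_agents_general
    {G : Type*} [LinearOrder G]
    (S : Finset G) (v : Fin 2 → G → ℝ)
    (A : Fin 2 → Finset G) (hA : IsAlloc 2 S A)
    (h : ∀ i : Fin 2, ∀ r ∈ Finset.Icc 1 S.card, ∀ T : Finset G,
      IsTopPrefix (v i) S T → T.card = r → r / 2 ≤ (A i ∩ T).card) :
    SDEF1 2 v S A := by
  intro i j hne
  obtain ⟨g, hg, hmax⟩ := exists_max_image (A j) (v i) (nonempty_iff_ne_empty.2 hne)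
  refine ⟨g, hg, fun g₀ hg₀ => ?_⟩
  rw [card_erase_inter_topSet_of_forall_le (v i) (hA.subset j) hg hmax]
  rcases eq_or_ne i j with rfl | hij
  · exact Nat.sub_le _ _
  have hH : topSet (v i) S g₀ ⊆ S := filter_subset _ _
  have hH_pos : 0 < (topSet (v i) S g₀).card := card_pos.2 ⟨g₀, mem_filter.2 ⟨hg₀, le_rfl⟩⟩
  have hhalf := h i _ (mem_Icc.2 ⟨hH_pos, card_le_card hH⟩) _ (isTopPrefix_topSet _ _ _) rfl
  have hsplit := hA.card_inter_add_card_inter hij hH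
  omega

/-- **Sufficiency for SD-EF1, two agents.** If `|A i ∩ T_i(S,r)| ≥ ⌊r/2⌋`
for both agents `i` and all `r ∈ [|S|]`, then the allocation `A` to two agents is
SD-EF1. -/
theorem sdef1_of_topPrefix_condition_two_agents
    {G : Type*} [LinearOrder G]
    (S : Finset G) (v : Fin 2 → G → ℝ)
    (hv : ∀ i : Fin 2, ∀ g ∈ S, 0 ≤ v i g)
    (A : Fin 2 → Finset G) (hA : IsAlloc 2 S A)
    (h : ∀ i : Fin 2, ∀ r ∈ Finset.Icc 1 S.card, ∀ T : Finset G,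
      IsTopPrefix (v i) S T → T.card = r → r / 2 ≤ (A i ∩ T).card) :
    SDEF1 2 v S A :=
  sdef1_of_topPrefix_condition_two_agents_general S v A hA h
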